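/- arXiv:2307.10644 — 3 statements merged into one kernel-verified Lean document; each statement's English description precedes it below -/
import Mathlib

section
/- For μ ∈ ℝᵈ and Σ ∈ Sym₊(d,ℝ), the (d+1)×(d+1) block matrix f(μ,Σ) = [[Σ + μμᵀ, μ],[μᵀ, 1]] is symmetric positive definite. -/
/-!
The matrix is the Schur-complement completion of `Σ` by the unit block: with `B = μ` as a column,
`f(μ, Σ) = [[Σ + B Bᵀ, B], [Bᵀ, 1]]`, whose Schur complement with respect to the lower block `1`
is `Σ` itself. Positive semidefiniteness passes through the Schur complement, and
`det f(μ, Σ) = det Σ ≠ 0` upgrades it to positive definiteness.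
-/

open Matrix

/-- Calvo–Oller embedding of normal parameters into the SPD cone. -/
noncomputable def coEmbed {d : ℕ} (μ : Fin d → ℝ) (S : Matrix (Fin d) (Fin d) ℝ) :
    Matrix (Fin d ⊕ Fin 1) (Fin d ⊕ Fin 1) ℝ :=
  fromBlocks (S + vecMulVec μ μ) (replicateCol (Fin 1) μ) (replicateRow (Fin 1) μ) 1

namespace Matrix

open scoped ComplexOrder

variable {m n 𝕜 : Type*} [Fintype m] [Fintype n] [DecidableEq m] [DecidableEq n] [RCLike 𝕜]

theorem posDef_fromBlocks_one₂₂_iff (A : Matrix m m 𝕜) (B : Matrix m n 𝕜) :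
    (fromBlocks A B Bᴴ 1).PosDef ↔ (A - B * Bᴴ).PosDef := by
  have hSchur : (fromBlocks A B Bᴴ 1).PosSemidef ↔ (A - B * Bᴴ).PosSemidef := by
    let : Invertible (1 : Matrix n n 𝕜) := invertibleOne
    simpa using PosDef.fromBlocks₂₂ A B PosDef.one
  have hdet : (fromBlocks A B Bᴴ 1).det = (A - B * Bᴴ).det := det_fromBlocks_one₂₂ A B Bᴴ
  constructor
  · intro h
    rw [(hSchur.mp h.posSemidef).posDef_iff_det_ne_zero, ← hdet]
    exact h.det_pos.ne'
  · intro h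
    rw [(hSchur.mpr h.posSemidef).posDef_iff_det_ne_zero, hdet]
    exact h.det_pos.ne'

end Matrix

theorem coEmbed_eq_fromBlocks {d : ℕ} (μ : Fin d → ℝ) (S : Matrix (Fin d) (Fin d) ℝ) :
    coEmbed μ S = fromBlocks (S + replicateCol (Fin 1) μ * (replicateCol (Fin 1) μ)ᴴ)
      (replicateCol (Fin 1) μ) (replicateCol (Fin 1) μ)ᴴ 1 := by
  rw [coEmbed, conjTranspose_replicateCol, star_trivial, vecMulVec_eq (Fin 1)]
  rfl

theorem stmt5 {d : ℕ} (μ : Fin d → ℝ) (S : Matrix (Fin d) (Fin d) ℝ) (hS : S.PosDef) :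
    (coEmbed μ S).PosDef := by
  rwa [coEmbed_eq_fromBlocks, posDef_fromBlocks_one₂₂_iff, add_sub_cancel_right]
end

section
/- For μ₁, μ₂ ∈ ℝᵈ and Σ₁, Σ₂ ∈ Sym₊(d,ℝ), with P̄ᵢ = f(μᵢ,Σᵢ) = [[Σᵢ + μᵢμᵢᵀ, μᵢ],[μᵢᵀ, 1]], it holds that tr(P̄₂⁻¹ P̄₁) = 1 + tr(Σ₂⁻¹Σ₁) + (μ₁−μ₂)ᵀ Σ₂⁻¹ (μ₁−μ₂). -/
/-!
The Schur complement of the lower right entry `1` of `f(μ, Σ)` is `Σ + μμᵀ - μμᵀ = Σ`, which gives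
the block formula for `f(μ, Σ)⁻¹`. The trace of a product of two
`2 × 2` block matrices is the sum of the traces of the four products of facing blocks, and here
these are `tr(Σ₂⁻¹Σ₁) + μ₁ᵀΣ₂⁻¹μ₁`, `-μ₁ᵀΣ₂⁻¹μ₂`, `-μ₂ᵀΣ₂⁻¹μ₁` and `1 + μ₂ᵀΣ₂⁻¹μ₂`,
which add up to the right-hand side.
-/

open Matrix

namespace Matrix

variable {R m n : Type*} [Fintype m]

theorem trace_fromBlocks_mul_fromBlocks [NonUnitalNonAssocSemiring R] [Fintype n]
    (A : Matrix m m R) (B : Matrix m n R) (C : Matrix n m R) (D : Matrix n n R)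
    (A' : Matrix m m R) (B' : Matrix m n R) (C' : Matrix n m R) (D' : Matrix n n R) :
    (fromBlocks A B C D * fromBlocks A' B' C' D').trace =
      (A * A').trace + (B * C').trace + (C * B').trace + (D * D').trace := by
  simp only [fromBlocks_multiply, trace, diag, Fintype.sum_sum_type, fromBlocks_apply₁₁,
    fromBlocks_apply₂₂, add_apply, Finset.sum_add_distrib]
  abel

variable [CommRing R]

/- Mathlib's `vecMulVec_eq` sums over `Fin 1` with the instance `Unique.fintype`; this version uses
the instance `Fin.fintype 1` that occurs in `fromBlocks_multiply`, so that rewrites match. -/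
omit [Fintype m] in
theorem vecMulVec_eq_replicateCol_mul_replicateRow (u v : m → R) :
    vecMulVec u v = replicateCol (Fin 1) u * replicateRow (Fin 1) v :=
  vecMulVec_eq (Fin 1) u v

theorem trace_replicateRow_mul_replicateCol (u v : m → R) :
    (replicateRow (Fin 1) u * replicateCol (Fin 1) v).trace = u ⬝ᵥ v := by
  simp [trace]

theorem replicateRow_mul_mul_replicateCol (M : Matrix m m R) (u v : m → R) :
    replicateRow (Fin 1) v * M * replicateCol (Fin 1) u =
      (v ⬝ᵥ M *ᵥ u) • (1 : Matrix (Fin 1) (Fin 1) R) := by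
  ext i j
  simp [Subsingleton.elim i j, ← replicateRow_vecMul, dotProduct_mulVec]

variable [DecidableEq m]

theorem inv_fromBlocks_add_vecMulVec (S : Matrix m m R) (hS : IsUnit S.det) (u v : m → R) :
    (fromBlocks (S + vecMulVec u v) (replicateCol (Fin 1) u) (replicateRow (Fin 1) v) 1)⁻¹ =
      fromBlocks S⁻¹ (-replicateCol (Fin 1) (S⁻¹ *ᵥ u)) (-replicateRow (Fin 1) (v ᵥ* S⁻¹))
        ((1 + v ⬝ᵥ S⁻¹ *ᵥ u) • 1) := by
  apply inv_eq_right_inv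
  have hSS : S * S⁻¹ = 1 := mul_nonsing_inv S hS
  have hvSu := replicateRow_mul_mul_replicateCol S⁻¹ u v
  rw [fromBlocks_multiply, ← fromBlocks_one, vecMulVec_eq_replicateCol_mul_replicateRow,
    replicateCol_mulVec, replicateRow_vecMul]
  congr 1
  · rw [Matrix.add_mul, hSS, Matrix.mul_assoc, Matrix.mul_neg]
    abel
  · rw [Matrix.mul_neg, Matrix.add_mul, ← Matrix.mul_assoc S, hSS, Matrix.one_mul,
      Matrix.mul_assoc, ← Matrix.mul_assoc (replicateRow (Fin 1) v), hvSu]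
    simp only [add_smul, one_smul, Matrix.mul_add, Matrix.mul_smul, Matrix.mul_one]
    abel
  · rw [Matrix.one_mul, add_neg_cancel]
  · rw [Matrix.mul_neg, ← Matrix.mul_assoc, hvSu, Matrix.one_mul, add_smul, one_smul]
    abel

theorem trace_inv_fromBlocks_mul_fromBlocks (μ₁ μ₂ : m → R) (S₁ S₂ : Matrix m m R)
    (hS₂ : IsUnit S₂.det) :
    ((fromBlocks (S₂ + vecMulVec μ₂ μ₂) (replicateCol (Fin 1) μ₂) (replicateRow (Fin 1) μ₂) 1)⁻¹ *
        fromBlocks (S₁ + vecMulVec μ₁ μ₁) (replicateCol (Fin 1) μ₁) (replicateRow (Fin 1) μ₁) 1).trace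
      = 1 + (S₂⁻¹ * S₁).trace + (μ₁ - μ₂) ⬝ᵥ S₂⁻¹ *ᵥ (μ₁ - μ₂) := by
  rw [inv_fromBlocks_add_vecMulVec S₂ hS₂, trace_fromBlocks_mul_fromBlocks, Matrix.mul_add,
    trace_add, mul_vecMulVec, trace_vecMulVec, Matrix.neg_mul, Matrix.neg_mul, trace_neg,
    trace_neg, ← vecMulVec_eq_replicateCol_mul_replicateRow, trace_vecMulVec,
    trace_replicateRow_mul_replicateCol, Matrix.mul_one, trace_smul, trace_one, Fintype.card_fin,
    Nat.cast_one, smul_eq_mul, mul_one]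
  rw [dotProduct_comm (S₂⁻¹ *ᵥ μ₁), dotProduct_comm (S₂⁻¹ *ᵥ μ₂), ← dotProduct_mulVec,
    mulVec_sub, dotProduct_sub, sub_dotProduct, sub_dotProduct]
  ring

end Matrix

theorem stmt9_general {d : ℕ} (μ₁ μ₂ : Fin d → ℝ) (S₁ S₂ : Matrix (Fin d) (Fin d) ℝ)
    (h₂ : S₂.PosDef) :
    ((coEmbed μ₂ S₂)⁻¹ * coEmbed μ₁ S₁).trace
      = 1 + (S₂⁻¹ * S₁).trace + (μ₁ - μ₂) ⬝ᵥ S₂⁻¹.mulVec (μ₁ - μ₂) :=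
  trace_inv_fromBlocks_mul_fromBlocks μ₁ μ₂ S₁ S₂ h₂.det_pos.ne'.isUnit

theorem stmt9 {d : ℕ} (μ₁ μ₂ : Fin d → ℝ) (S₁ S₂ : Matrix (Fin d) (Fin d) ℝ)
    (h₁ : S₁.PosDef) (h₂ : S₂.PosDef) :
    ((coEmbed μ₂ S₂)⁻¹ * coEmbed μ₁ S₁).trace
      = 1 + (S₂⁻¹ * S₁).trace + (μ₁ - μ₂) ⬝ᵥ S₂⁻¹.mulVec (μ₁ - μ₂) :=
  stmt9_general μ₁ μ₂ S₁ S₂ h₂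
end

section
/- The Kullback–Leibler divergence between two d-variate normals, expressed as D_KL((μ₁,Σ₁),(μ₂,Σ₂)) = ½(tr(Σ₂⁻¹Σ₁) − d + (μ₂−μ₁)ᵀΣ₂⁻¹(μ₂−μ₁) + log(det Σ₂/det Σ₁)), is preserved by the Calvo–Oller embedding: D_KL((μ₁,Σ₁),(μ₂,Σ₂)) equals the KL divergence between the centered (d+1)-variate normals with covariances P̄₁ = f(μ₁,Σ₁) and P̄₂ = f(μ₂,Σ₂), namely ½(tr(P̄₂⁻¹P̄₁) − (d+1) + log(det P̄₂/det P̄₁)). -/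
/-!
Write `T μ = [[1, μ], [0, 1]]`. Then `f(μ, Σ) = T μ · diag(Σ, 1) · (T μ)ᵀ`, so `det f(μ, Σ) = det Σ`,
and by cyclicity of the trace
`tr (f(μ₂, Σ₂)⁻¹ f(μ₁, Σ₁)) = tr (diag(Σ₂, 1)⁻¹ · f(μ₁ - μ₂, Σ₁))
  = tr (Σ₂⁻¹ Σ₁) + (μ₁ - μ₂)ᵀ Σ₂⁻¹ (μ₁ - μ₂) + 1`,
because `(T μ₂)⁻¹ T μ₁ = T (μ₁ - μ₂)`. The extra `1` cancels the extra dimension.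
-/

open Matrix

namespace Matrix

variable {m n R : Type*} [Fintype m] [Fintype n] [CommRing R]

theorem trace_fromBlocks (A : Matrix m m R) (B : Matrix m n R) (C : Matrix n m R)
    (D : Matrix n n R) : (fromBlocks A B C D).trace = A.trace + D.trace := by
  simp [trace, Fintype.sum_sum_type]

variable [DecidableEq m] [DecidableEq n]

theorem trace_inv_congr_mul_congr (A D B E : Matrix m m R) :
    ((A * D * Aᵀ)⁻¹ * (B * E * Bᵀ)).trace = (D⁻¹ * (A⁻¹ * B * E * (A⁻¹ * B)ᵀ)).trace := by
  rw [mul_inv_rev, mul_inv_rev, ← transpose_nonsing_inv, transpose_mul, Matrix.mul_assoc,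
    trace_mul_comm]
  simp only [Matrix.mul_assoc]

theorem inv_fromBlocks_one_mul_fromBlocks_one (B C : Matrix m n R) :
    (fromBlocks 1 B 0 1 : Matrix (m ⊕ n) (m ⊕ n) R)⁻¹ * fromBlocks 1 C 0 1 =
      fromBlocks 1 (C - B) 0 1 := by
  rw [inv_fromBlocks_zero₂₁_of_isUnit_iff _ _ _ ⟨fun _ => isUnit_one, fun _ => isUnit_one⟩,
    fromBlocks_multiply]
  simp [sub_eq_add_neg]

theorem fromBlocks_one_mul_fromBlocks_mul_transpose (B : Matrix m n R) (S : Matrix m m R) :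
    fromBlocks 1 B 0 1 * fromBlocks S 0 0 1 * (fromBlocks 1 B 0 1)ᵀ =
      fromBlocks (S + B * Bᵀ) B Bᵀ 1 := by
  simp [fromBlocks_transpose, fromBlocks_multiply]

theorem trace_inv_fromBlocks_mul_fromBlocks_s10 {S : Matrix m m R} (hS : IsUnit S)
    (A : Matrix m m R) (B : Matrix m n R) (C : Matrix n m R) :
    ((fromBlocks S 0 0 1)⁻¹ * fromBlocks A B C 1).trace = (S⁻¹ * A).trace + Fintype.card n := by
  rw [inv_fromBlocks_zero₂₁_of_isUnit_iff _ _ _ (by simp [hS]), fromBlocks_multiply,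
    trace_fromBlocks]
  simp

end Matrix

theorem coEmbed_eq {d : ℕ} (μ : Fin d → ℝ) (S : Matrix (Fin d) (Fin d) ℝ) :
    coEmbed μ S = fromBlocks 1 (replicateCol (Fin 1) μ) 0 1 * fromBlocks S 0 0 1 *
      (fromBlocks 1 (replicateCol (Fin 1) μ) 0 1)ᵀ := by
  rw [fromBlocks_one_mul_fromBlocks_mul_transpose, transpose_replicateCol, coEmbed,
    vecMulVec_eq (Fin 1)]
  rfl

theorem det_coEmbed {d : ℕ} (μ : Fin d → ℝ) (S : Matrix (Fin d) (Fin d) ℝ) :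
    (coEmbed μ S).det = S.det := by
  simp [coEmbed_eq]

theorem trace_inv_coEmbed_mul_coEmbed {d : ℕ} (μ₁ μ₂ : Fin d → ℝ)
    (S₁ : Matrix (Fin d) (Fin d) ℝ) {S₂ : Matrix (Fin d) (Fin d) ℝ} (h₂ : IsUnit S₂) :
    ((coEmbed μ₂ S₂)⁻¹ * coEmbed μ₁ S₁).trace
      = (S₂⁻¹ * S₁).trace + (μ₂ - μ₁) ⬝ᵥ S₂⁻¹ *ᵥ (μ₂ - μ₁) + 1 := by
  have hquad : (μ₂ - μ₁) ⬝ᵥ S₂⁻¹ *ᵥ (μ₂ - μ₁) = (S₂⁻¹ * vecMulVec (μ₁ - μ₂) (μ₁ - μ₂)).trace := by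
    rw [mul_vecMulVec, trace_vecMulVec, dotProduct_comm, ← neg_sub μ₁ μ₂, mulVec_neg,
      neg_dotProduct, dotProduct_neg, neg_neg]
  have hcol : replicateCol (Fin 1) μ₁ - replicateCol (Fin 1) μ₂ = replicateCol (Fin 1) (μ₁ - μ₂) :=
    rfl
  rw [coEmbed_eq, coEmbed_eq, trace_inv_congr_mul_congr, inv_fromBlocks_one_mul_fromBlocks_one,
    hcol, ← coEmbed_eq, coEmbed, trace_inv_fromBlocks_mul_fromBlocks_s10 h₂,
    Matrix.mul_add, trace_add, hquad, Fintype.card_fin, Nat.cast_one]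

theorem stmt10_general {d : ℕ} (μ₁ μ₂ : Fin d → ℝ) (S₁ S₂ : Matrix (Fin d) (Fin d) ℝ)
    (h₂ : S₂.PosDef) :
    (1 / 2 : ℝ) * ((S₂⁻¹ * S₁).trace - d + (μ₂ - μ₁) ⬝ᵥ S₂⁻¹.mulVec (μ₂ - μ₁)
        + Real.log (S₂.det / S₁.det))
      = (1 / 2 : ℝ) * (((coEmbed μ₂ S₂)⁻¹ * coEmbed μ₁ S₁).trace - (d + 1)
        + Real.log ((coEmbed μ₂ S₂).det / (coEmbed μ₁ S₁).det)) := by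
  rw [trace_inv_coEmbed_mul_coEmbed μ₁ μ₂ S₁ h₂.isUnit, det_coEmbed, det_coEmbed]
  ring

theorem stmt10 {d : ℕ} (μ₁ μ₂ : Fin d → ℝ) (S₁ S₂ : Matrix (Fin d) (Fin d) ℝ)
    (h₁ : S₁.PosDef) (h₂ : S₂.PosDef) :
    (1 / 2 : ℝ) * ((S₂⁻¹ * S₁).trace - d + (μ₂ - μ₁) ⬝ᵥ S₂⁻¹.mulVec (μ₂ - μ₁)
        + Real.log (S₂.det / S₁.det))
      = (1 / 2 : ℝ) * (((coEmbed μ₂ S₂)⁻¹ * coEmbed μ₁ S₁).trace - (d + 1)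
        + Real.log ((coEmbed μ₂ S₂).det / (coEmbed μ₁ S₁).det)) :=
  stmt10_general μ₁ μ₂ S₁ S₂ h₂
end
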